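/- With the extended data p̄, q̄, M̄, Ḡ for the partial keypoint-guided problem, for every π̄ ∈ Π(p̄,q̄;M̄) the objective decomposes as ⟨M̄⊙π̄, Ḡ⟩_F = Σ_{i=1}^m Σ_{j=1}^n M_{i,j} π̄_{i,j} G_{i,j} + ξ(‖p‖₁ + ‖q‖₁ − 2s) + A·π̄_{m+1,n+1}, where ⟨·,·⟩_F is the Frobenius inner product. -/

import Mathlib

open Finset

noncomputable section

variable {m n : ℕ}

/-- Mask matrix determined by the keypoint pair set `K`:
`M i j = 1` if `(i,j) ∈ K`; `M i j = 0` if `i ∈ I` or `j ∈ J` but `(i,j) ∉ K`;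
`M i j = 1` otherwise. -/
def mask (K : Finset (Fin m × Fin n)) : Matrix (Fin m) (Fin n) ℝ :=
  fun i j =>
    if (i, j) ∈ K then 1
    else if (∃ j', (i, j') ∈ K) ∨ (∃ i', (i', j) ∈ K) then 0
    else 1

/-- The masked feasible set `Π(p, q; M)`. -/
def PiM (M : Matrix (Fin m) (Fin n) ℝ) (p : Fin m → ℝ) (q : Fin n → ℝ) :
    Set (Matrix (Fin m) (Fin n) ℝ) :=
  {π | (∀ i j, 0 ≤ π i j) ∧ (∀ i, ∑ j, M i j * π i j = p i) ∧
    (∀ j, ∑ i, M i j * π i j = q j)}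

/-- Extend an `m × n` matrix by one extra column, one extra row and a corner entry. -/
def extend (B : Matrix (Fin m) (Fin n) ℝ) (col : Fin m → ℝ) (row : Fin n → ℝ)
    (corner : ℝ) : Matrix (Fin (m + 1)) (Fin (n + 1)) ℝ :=
  fun i j =>
    if hi : (i : ℕ) < m then
      if hj : (j : ℕ) < n then B ⟨i, hi⟩ ⟨j, hj⟩ else col ⟨i, hi⟩
    else if hj : (j : ℕ) < n then row ⟨j, hj⟩ else corner

/-- Extend a vector by one extra entry. -/
def extVec (v : Fin m → ℝ) (last : ℝ) : Fin (m + 1) → ℝ :=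
  fun i => if hi : (i : ℕ) < m then v ⟨i, hi⟩ else last

/-- `a i = 0` if `i ∈ I` and `1` otherwise. -/
def avec (K : Finset (Fin m × Fin n)) : Fin m → ℝ :=
  fun i => if ∃ j, (i, j) ∈ K then 0 else 1

/-- `b j = 0` if `j ∈ J` and `1` otherwise. -/
def bvec (K : Finset (Fin m × Fin n)) : Fin n → ℝ :=
  fun j => if ∃ i, (i, j) ∈ K then 0 else 1

/-- The extended mask `M̄`. -/
def Mbar (K : Finset (Fin m × Fin n)) : Matrix (Fin (m + 1)) (Fin (n + 1)) ℝ :=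
  extend (mask K) (avec K) (bvec K) 1

/-- The extended guiding matrix `Ḡ`. -/
def Gbar (G : Matrix (Fin m) (Fin n) ℝ) (ξ A : ℝ) :
    Matrix (Fin (m + 1)) (Fin (n + 1)) ℝ :=
  extend G (fun _ => ξ) (fun _ => ξ) (2 * ξ + A)

/-- The extended source weights `p̄ = (pᵀ, ‖q‖₁ − s)ᵀ`. -/
def pbar (p : Fin m → ℝ) (q : Fin n → ℝ) (s : ℝ) : Fin (m + 1) → ℝ :=
  extVec p (∑ j, q j - s)

/-- The extended target weights `q̄ = (qᵀ, ‖p‖₁ − s)ᵀ`. -/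
def qbar (p : Fin m → ℝ) (q : Fin n → ℝ) (s : ℝ) : Fin (n + 1) → ℝ :=
  extVec q (∑ i, p i - s)

section extend

variable (B : Matrix (Fin m) (Fin n) ℝ) (col : Fin m → ℝ) (row : Fin n → ℝ) (corner : ℝ)

@[simp]
lemma extend_castSucc_castSucc (i : Fin m) (j : Fin n) :
    extend B col row corner i.castSucc j.castSucc = B i j := by
  simp [extend]

@[simp]
lemma extend_castSucc_last (i : Fin m) :
    extend B col row corner i.castSucc (Fin.last n) = col i := by
  simp [extend]

@[simp]
lemma extend_last_castSucc (j : Fin n) :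
    extend B col row corner (Fin.last m) j.castSucc = row j := by
  simp [extend]

@[simp]
lemma extend_last_last : extend B col row corner (Fin.last m) (Fin.last n) = corner := by
  simp [extend]

end extend

@[simp]
lemma extVec_last (v : Fin m → ℝ) (last : ℝ) : extVec v last (Fin.last m) = last := by
  simp [extVec]

lemma sum_extend_mul_mul_extend (B C : Matrix (Fin m) (Fin n) ℝ) (col col' : Fin m → ℝ)
    (row row' : Fin n → ℝ) (corner corner' : ℝ) (π : Matrix (Fin (m + 1)) (Fin (n + 1)) ℝ) :
    ∑ i, ∑ j, extend B col row corner i j * π i j * extend C col' row' corner' i j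
      = ∑ i : Fin m, ∑ j : Fin n, B i j * π i.castSucc j.castSucc * C i j
        + ∑ i, col i * π i.castSucc (Fin.last n) * col' i
        + ∑ j, row j * π (Fin.last m) j.castSucc * row' j
        + corner * π (Fin.last m) (Fin.last n) * corner' := by
  simp only [Fin.sum_univ_castSucc, extend_castSucc_castSucc, extend_castSucc_last,
    extend_last_castSucc, extend_last_last, sum_add_distrib]
  ring

namespace PiM

variable {M : Matrix (Fin m) (Fin n) ℝ} {a : Fin m → ℝ} {b : Fin n → ℝ}
  {p : Fin m → ℝ} {q : Fin n → ℝ} {α β : ℝ} {π : Matrix (Fin (m + 1)) (Fin (n + 1)) ℝ}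

lemma sum_col_mul_last (hπ : π ∈ PiM (extend M a b 1) (extVec p α) (extVec q β)) :
    ∑ i, a i * π i.castSucc (Fin.last n) = β - π (Fin.last m) (Fin.last n) := by
  have h := hπ.2.2 (Fin.last n)
  simp only [Fin.sum_univ_castSucc, extend_castSucc_last, extend_last_last, extVec_last,
    one_mul] at h
  linarith

lemma sum_row_mul_last (hπ : π ∈ PiM (extend M a b 1) (extVec p α) (extVec q β)) :
    ∑ j, b j * π (Fin.last m) j.castSucc = α - π (Fin.last m) (Fin.last n) := by
  have h := hπ.2.1 (Fin.last m)
  simp only [Fin.sum_univ_castSucc, extend_last_castSucc, extend_last_last, extVec_last,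
    one_mul] at h
  linarith

end PiM

theorem extended_objective_decomposition_general
    (p : Fin m → ℝ) (q : Fin n → ℝ) (K : Finset (Fin m × Fin n)) (s : ℝ)
    (G : Matrix (Fin m) (Fin n) ℝ) (ξ A : ℝ)
    (πb : Matrix (Fin (m + 1)) (Fin (n + 1)) ℝ)
    (hπb : πb ∈ PiM (Mbar K) (pbar p q s) (qbar p q s)) :
    ∑ i, ∑ j, Mbar K i j * πb i j * Gbar G ξ A i j
      = (∑ i : Fin m, ∑ j : Fin n, mask K i j * πb i.castSucc j.castSucc * G i j)
        + ξ * ((∑ i, p i) + (∑ j, q j) - 2 * s)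
        + A * πb (Fin.last m) (Fin.last n) := by
  have hcol := PiM.sum_col_mul_last hπb
  have hrow := PiM.sum_row_mul_last hπb
  -- Each of the two ξ-weighted dummy sums counts the corner mass once too few, which the
  -- corner weight `2ξ + A` makes up for.
  rw [Mbar, Gbar, sum_extend_mul_mul_extend, ← sum_mul, ← sum_mul, hcol, hrow]
  ring

/-- for every `π̄ ∈ Π(p̄, q̄; M̄)`, the Frobenius objective
`⟨M̄ ⊙ π̄, Ḡ⟩_F` decomposes as the cost of the upper-left block plus
`ξ(‖p‖₁ + ‖q‖₁ − 2s)` plus `A` times the dummy-to-dummy mass. -/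
theorem extended_objective_decomposition
    (p : Fin m → ℝ) (q : Fin n → ℝ) (K : Finset (Fin m × Fin n)) (s : ℝ)
    (G : Matrix (Fin m) (Fin n) ℝ) (ξ A : ℝ)
    (hp : ∀ i, 0 ≤ p i) (hq : ∀ j, 0 ≤ q j)
    (hK1 : ∀ a ∈ K, ∀ b ∈ K, a.1 = b.1 → a = b)
    (hK2 : ∀ a ∈ K, ∀ b ∈ K, a.2 = b.2 → a = b)
    (hs0 : 0 ≤ s) (hs : s ≤ min (∑ i, p i) (∑ j, q j))
    (πb : Matrix (Fin (m + 1)) (Fin (n + 1)) ℝ)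
    (hπb : πb ∈ PiM (Mbar K) (pbar p q s) (qbar p q s)) :
    ∑ i, ∑ j, Mbar K i j * πb i j * Gbar G ξ A i j
      = (∑ i : Fin m, ∑ j : Fin n, mask K i j * πb i.castSucc j.castSucc * G i j)
        + ξ * ((∑ i, p i) + (∑ j, q j) - 2 * s)
        + A * πb (Fin.last m) (Fin.last n) :=
  extended_objective_decomposition_general p q K s G ξ A πb hπb
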